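/- arXiv:2412.08042 — 2 statements merged into one kernel-verified Lean document; each statement's English description precedes it below -/
import Mathlib

section
/- Characterization of the PSW estimand (equation (B.4.2)): Assume (A1)–(A3), P(A̲(K−m)=1_m) > 0 and P(A̲(K−m)=0_m) > 0. Then θ_psw^(m) = Σ_{b̄} 𝔼[Y^{(b̄,1_m)} | Ā(K−m−1)=b̄] · P(Ā(K−m−1)=b̄ | A̲(K−m)=1_m) − Σ_{b̄} 𝔼[Y^{(b̄,0_m)} | Ā(K−m−1)=b̄] · P(Ā(K−m−1)=b̄ | A̲(K−m)=0_m), where both sums run over b̄ ∈ {0,1}^{K−m} with P(Ā(K−m−1)=b̄) > 0. -/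
/-!
On the event `Ā(K−1) = (b̄, a_m)` the weight `W_psw^(m)` is the constant
`∏_{k ≥ K−m} P(A(k) = a | Ā(k−1) = ā(k−1))` times the inverse propensities
`∏_{k ≥ K−m} 1 / P(A(k) = a | L̄(k), Ā(k−1))`. Integrating against `Y = Y^{(b̄,a_m)}` (A1), the
inverse propensities are removed one at a time, from the last time `K−1` backwards: on each stratum
of `(L̄(k), Ā(k−1))` the propensity at `k` is a positive constant (A3), the earlier ones are
constant as well, and by (A2) restricting the stratum to `A(k) = a` multiplies the integral of
`Y^{(b̄,a_m)}` by exactly the propensity at `k`. What remains is the constant times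
`𝔼[Y^{(b̄,a_m)} 1{Ā(K−m−1) = b̄}]`, and by the chain rule the constant times `P(Ā(K−m−1) = b̄)` is
`P(Ā(K−m−1) = b̄, A̲(K−m) = a_m)`. Taking `Y = 1` shows that the weights integrate to
`P(A̲(K−m) = a_m)` over `{A̲(K−m) = a_m}`, and dividing gives each arm of the contrast.
-/

open MeasureTheory Finset
open scoped Classical

namespace MSMPaper

noncomputable section

variable {Ω : Type*} [MeasurableSpace Ω] {𝓛 : Type*}

/-- Conditional probability `P(E | F) = P(E ∩ F) / P(F)` as a real number
(junk value `0` when `P F = 0`). -/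
def cP (P : Measure Ω) (E F : Set Ω) : ℝ := (P (E ∩ F)).toReal / (P F).toReal

variable {K : ℕ}

/-- Event `Ā(t−1) = b̄` (treatment history up to, not including, time `t`). -/
def Apast (A : Fin K → Ω → Bool) (t : ℕ) (b : Fin K → Bool) : Set Ω :=
  {ω | ∀ k : Fin K, (k : ℕ) < t → A k ω = b k}

/-- Event `L̄(t) = l̄` (covariate history up to and including time `t`). -/
def Lpast (L : Fin K → Ω → 𝓛) (t : ℕ) (l : Fin K → 𝓛) : Set Ω :=
  {ω | ∀ k : Fin K, (k : ℕ) ≤ t → L k ω = l k}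

/-- Event `A̲(s, t−1) = b` (treatment history from time `s` up to, not including, `t`). -/
def Aseg (A : Fin K → Ω → Bool) (s t : ℕ) (b : Fin K → Bool) : Set Ω :=
  {ω | ∀ k : Fin K, s ≤ (k : ℕ) → (k : ℕ) < t → A k ω = b k}

/-- Event `A̲(K−m) = a̲` for a (last-`m`) treatment vector `as`. -/
def EtrV (A : Fin K → Ω → Bool) (m : ℕ) (as : Fin K → Bool) : Set Ω :=
  {ω | ∀ k : Fin K, K - m ≤ (k : ℕ) → A k ω = as k}

/-- Event `A̲(K−m) = a_m` (constant `a` on the last `m` coordinates). -/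
def Etr (A : Fin K → Ω → Bool) (m : ℕ) (a : Bool) : Set Ω :=
  EtrV A m (fun _ => a)

/-- Stabilized weights `W_sw`. -/
def Wsw (P : Measure Ω) (A : Fin K → Ω → Bool) (L : Fin K → Ω → 𝓛) : Ω → ℝ :=
  fun ω => ∏ k : Fin K,
    cP P {ω' | A k ω' = A k ω} (Apast A (k : ℕ) (fun j => A j ω)) /
      cP P {ω' | A k ω' = A k ω}
        (Lpast L (k : ℕ) (fun j => L j ω) ∩ Apast A (k : ℕ) (fun j => A j ω))

/-- Restricted stabilized weights `W_rsw^(m)`. -/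
def Wrsw (P : Measure Ω) (A : Fin K → Ω → Bool) (L : Fin K → Ω → 𝓛) (m : ℕ) : Ω → ℝ :=
  fun ω => ∏ k ∈ Finset.univ.filter (fun k : Fin K => K - m ≤ (k : ℕ)),
    cP P {ω' | A k ω' = A k ω} (Aseg A (K - m) (k : ℕ) (fun j => A j ω)) /
      cP P {ω' | A k ω' = A k ω}
        (Lpast L (k : ℕ) (fun j => L j ω) ∩ Apast A (k : ℕ) (fun j => A j ω))

/-- Partial stabilized weights `W_psw^(m)`. -/
def Wpsw (P : Measure Ω) (A : Fin K → Ω → Bool) (L : Fin K → Ω → 𝓛) (m : ℕ) : Ω → ℝ :=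
  fun ω => ∏ k ∈ Finset.univ.filter (fun k : Fin K => K - m ≤ (k : ℕ)),
    cP P {ω' | A k ω' = A k ω} (Apast A (k : ℕ) (fun j => A j ω)) /
      cP P {ω' | A k ω' = A k ω}
        (Lpast L (k : ℕ) (fun j => L j ω) ∩ Apast A (k : ℕ) (fun j => A j ω))

/-- IP-weighted contrast `θ_W^(m)`. -/
def θW (P : Measure Ω) (A : Fin K → Ω → Bool) (m : ℕ) (W Y : Ω → ℝ) : ℝ :=
  (∫ ω in Etr A m true, W ω * Y ω ∂P) / (∫ ω in Etr A m true, W ω ∂P) -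
    (∫ ω in Etr A m false, W ω * Y ω ∂P) / (∫ ω in Etr A m false, W ω ∂P)

/-- `rev j` is the time index `K − 1 − j`; the paper's coefficient `ψ_{j+1}`
multiplies `a(K − (j+1)) = a(rev j)`. -/
def rev (j : Fin K) : Fin K := ⟨K - 1 - (j : ℕ), by have := j.isLt; omega⟩

/-- `θ^(K) = 𝔼[Y^{1_K}] − 𝔼[Y^{0_K}]`. -/
def θKfull (P : Measure Ω) (Ypot : (Fin K → Bool) → Ω → ℝ) : ℝ :=
  (∫ ω, Ypot (fun _ => true) ω ∂P) - ∫ ω, Ypot (fun _ => false) ω ∂P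

/-- (A1) consistency. -/
def A1ok (A : Fin K → Ω → Bool) (Y : Ω → ℝ) (Ypot : (Fin K → Bool) → Ω → ℝ) : Prop :=
  ∀ (a : Fin K → Bool) (ω : Ω), (∀ k, A k ω = a k) → Y ω = Ypot a ω

/-- (A2) sequential exchangeability. -/
def A2ok (P : Measure Ω) (A : Fin K → Ω → Bool) (L : Fin K → Ω → 𝓛)
    (Ypot : (Fin K → Bool) → Ω → ℝ) : Prop :=
  ∀ (t : Fin K) (a : Fin K → Bool) (B : Set ℝ), MeasurableSet B →
    ∀ (av : Bool) (l : Fin K → 𝓛) (b : Fin K → Bool),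
      0 < P (Lpast L (t : ℕ) l ∩ Apast A (t : ℕ) b) →
      cP P ({ω | Ypot a ω ∈ B} ∩ {ω | A t ω = av}) (Lpast L (t : ℕ) l ∩ Apast A (t : ℕ) b) =
        cP P {ω | Ypot a ω ∈ B} (Lpast L (t : ℕ) l ∩ Apast A (t : ℕ) b) *
          cP P {ω | A t ω = av} (Lpast L (t : ℕ) l ∩ Apast A (t : ℕ) b)

/-- (A3) positivity. -/
def A3ok (P : Measure Ω) (A : Fin K → Ω → Bool) (L : Fin K → Ω → 𝓛) : Prop :=
  ∀ (t : Fin K) (av : Bool) (l : Fin K → 𝓛) (b : Fin K → Bool),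
    0 < P (Lpast L (t : ℕ) l ∩ Apast A (t : ℕ) b) →
    0 < cP P {ω | A t ω = av} (Lpast L (t : ℕ) l ∩ Apast A (t : ℕ) b)

/-- The marginal structural model `𝔼[Y^{ā}] = ψ₀ + Σ_{j=1}^K ψ_j a(K−j)`;
here `ψ j` is the paper's `ψ_{j+1}`, the coefficient of `a(K−1−j)`. -/
def MSMeq (P : Measure Ω) (Ypot : (Fin K → Bool) → Ω → ℝ) (ψ0 : ℝ) (ψ : Fin K → ℝ) : Prop :=
  ∀ a : Fin K → Bool,
    (∫ ω, Ypot a ω ∂P) = ψ0 + ∑ j : Fin K, ψ j * (if a (rev j) = true then 1 else 0)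

/-- (A5) conditional MSM given the past treatment history `Ā(K−m−1)`. -/
def A5ok (P : Measure Ω) (A : Fin K → Ω → Bool) (Ypot : (Fin K → Bool) → Ω → ℝ)
    (m : ℕ) : Prop :=
  ∀ b : Fin K → Bool, 0 < P (Apast A (K - m) b) →
    ∃ (φ0 : ℝ) (φ : Fin K → ℝ), ∀ a : Fin K → Bool,
      (∫ ω in Apast A (K - m) b, Ypot a ω ∂P) / (P (Apast A (K - m) b)).toReal =
        φ0 + ∑ j : Fin K, φ j * (if a (rev j) = true then 1 else 0)

/-- `q_{j+1} = P(A(K−1−j)=1 | A̲(K−m)=1_m) − P(A(K−1−j)=1 | A̲(K−m)=0_m)`. -/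
def qcoef (P : Measure Ω) (A : Fin K → Ω → Bool) (m : ℕ) (j : Fin K) : ℝ :=
  cP P {ω | A (rev j) ω = true} (Etr A m true) -
    cP P {ω | A (rev j) ω = true} (Etr A m false)

end

noncomputable section

variable {Ω : Type*} [MeasurableSpace Ω] {K : ℕ}

/-- Concatenated regime `(b̄, a̲) ∈ {0,1}^K`: `b̄` on the coordinates before `K−m`,
`a̲` on the last `m` coordinates. -/
def concatRegime (m : ℕ) (b : {k : Fin K // (k : ℕ) < K - m} → Bool)
    (as : Fin K → Bool) : Fin K → Bool :=
  fun k => if h : (k : ℕ) < K - m then b ⟨k, h⟩ else as k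

/-- Event `Ā(K−m−1) = b̄` for a past history `b̄ ∈ {0,1}^{K−m}`. -/
def ApastV (A : Fin K → Ω → Bool) (m : ℕ)
    (b : {k : Fin K // (k : ℕ) < K - m} → Bool) : Set Ω :=
  {ω | ∀ (k : Fin K) (h : (k : ℕ) < K - m), A k ω = b ⟨k, h⟩}

end


section Partition

variable {Ω : Type*} [MeasurableSpace Ω] (μ : Measure Ω)

theorem setIntegral_eq_sum_preimage {G : Type*} [NormedAddCommGroup G] [NormedSpace ℝ G]
    {β : Type*} [Fintype β] [MeasurableSpace β] [MeasurableSingletonClass β]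
    {h : Ω → β} (hh : Measurable h) {E : Set Ω} (hE : MeasurableSet E) {f : Ω → G}
    (hf : ∀ b, IntegrableOn f (E ∩ h ⁻¹' {b}) μ) :
    ∫ ω in E, f ω ∂μ = ∑ b, ∫ ω in E ∩ h ⁻¹' {b}, f ω ∂μ := by
  rw [← integral_iUnion_fintype (fun b => hE.inter (hh (measurableSet_singleton b)))
    (fun b c hbc => ((Set.disjoint_singleton.2 hbc).preimage h).mono
      Set.inter_subset_right Set.inter_subset_right) hf]
  congr
  ext ω
  simp

theorem integrable_comp_finite_mul {β : Type*} [Finite β] [MeasurableSpace β]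
    [MeasurableSingletonClass β] {h : Ω → β} (hh : Measurable h) (g : β → ℝ)
    {X : Ω → ℝ} (hX : Integrable X μ) : Integrable (fun ω => g (h ω) * X ω) μ := by
  obtain ⟨C, hC⟩ := (Set.finite_range fun b => ‖g b‖).bddAbove
  exact hX.bdd_mul ((measurable_of_finite g).comp hh).aestronglyMeasurable
    (ae_of_all _ fun ω => hC ⟨h ω, rfl⟩)

end Partition

section CondProb

variable {Ω : Type*} [MeasurableSpace Ω] (μ : Measure Ω)

theorem cP_nonneg (E F : Set Ω) : 0 ≤ cP μ E F :=
  div_nonneg ENNReal.toReal_nonneg ENNReal.toReal_nonneg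

theorem cP_mul_toReal [IsFiniteMeasure μ] (E F : Set Ω) :
    cP μ E F * (μ F).toReal = (μ (E ∩ F)).toReal := by
  rcases eq_or_ne (μ F) 0 with hF | hF
  · simp [hF, measure_mono_null Set.inter_subset_right hF]
  · exact div_mul_cancel₀ _ (ENNReal.toReal_ne_zero.2 ⟨hF, measure_ne_top μ F⟩)

/-- The hypothesis says that the law of `X` under `μ` restricted to `F ∩ s` is `μ(s | F)` times
its law under `μ` restricted to `F`. -/
theorem setIntegral_inter_eq_cP_mul [IsFiniteMeasure μ] {X : Ω → ℝ} (hX : Measurable X)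
    {s F : Set Ω}
    (h : ∀ B : Set ℝ, MeasurableSet B → cP μ (X ⁻¹' B ∩ s) F = cP μ (X ⁻¹' B) F * cP μ s F) :
    ∫ ω in F ∩ s, X ω ∂μ = cP μ s F * ∫ ω in F, X ω ∂μ := by
  have hmap : (μ.restrict (F ∩ s)).map X
      = ENNReal.ofReal (cP μ s F) • (μ.restrict F).map X := by
    ext B hB
    have hreal : μ.real (X ⁻¹' B ∩ (F ∩ s)) = cP μ s F * μ.real (X ⁻¹' B ∩ F) := by
      rw [Set.inter_comm F s, ← Set.inter_assoc]
      simp only [measureReal_def]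
      rw [← cP_mul_toReal μ (X ⁻¹' B ∩ s), h B hB, ← cP_mul_toReal μ (X ⁻¹' B)]
      ring
    rw [Measure.map_apply hX hB, Measure.smul_apply, Measure.map_apply hX hB,
      Measure.restrict_apply (hX hB), Measure.restrict_apply (hX hB), smul_eq_mul,
      ← ofReal_measureReal, hreal, ENNReal.ofReal_mul (cP_nonneg μ s F), ofReal_measureReal]
  have hlaw : ∀ S : Set Ω, ∫ ω in S, X ω ∂μ = ∫ x, x ∂(μ.restrict S).map X := fun S =>
    (integral_map hX.aemeasurable aestronglyMeasurable_id).symm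
  rw [hlaw, hlaw, hmap, integral_smul_measure, ENNReal.toReal_ofReal (cP_nonneg μ s F),
    smul_eq_mul]

end CondProb

section History

variable {Ω : Type*} {𝓛 : Type*} {K : ℕ} {A : Fin K → Ω → Bool} {L : Fin K → Ω → 𝓛}

theorem prod_filter_le_eq_mul {M : Type*} [CommMonoid M] {t : ℕ} (ht : t < K) (f : Fin K → M) :
    ∏ k ∈ Finset.univ.filter (fun k : Fin K => t ≤ (k : ℕ)), f k =
      f ⟨t, ht⟩ * ∏ k ∈ Finset.univ.filter (fun k : Fin K => t + 1 ≤ (k : ℕ)), f k := by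
  rw [← Finset.prod_insert (by simp)]
  congr
  ext k
  simp only [Finset.mem_filter, Finset.mem_univ, true_and, Finset.mem_insert, Fin.ext_iff]
  omega

theorem measurableSet_Apast [MeasurableSpace Ω] (hA : ∀ k, Measurable (A k)) (t : ℕ)
    (a : Fin K → Bool) : MeasurableSet (Apast A t a) := by
  simp only [Apast, Set.ofPred_forall]
  exact .iInter fun k => .iInter fun _ => hA k (measurableSet_singleton _)

theorem measurableSet_Lpast [MeasurableSpace Ω] [MeasurableSpace 𝓛] [MeasurableSingletonClass 𝓛]
    (hL : ∀ k, Measurable (L k)) (t : ℕ) (l : Fin K → 𝓛) : MeasurableSet (Lpast L t l) := by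
  simp only [Lpast, Set.ofPred_forall]
  exact .iInter fun k => .iInter fun _ => hL k (measurableSet_singleton _)

theorem measurableSet_Etr [MeasurableSpace Ω] (hA : ∀ k, Measurable (A k)) (m : ℕ) (a : Bool) :
    MeasurableSet (Etr A m a) := by
  simp only [Etr, EtrV, Set.ofPred_forall]
  exact .iInter fun k => .iInter fun _ => hA k (measurableSet_singleton _)

theorem Apast_anti {s t : ℕ} (hst : s ≤ t) (a : Fin K → Bool) : Apast A t a ⊆ Apast A s a :=
  fun _ hω k hk => hω k (hk.trans_le hst)

theorem Lpast_anti {s t : ℕ} (hst : s ≤ t) (l : Fin K → 𝓛) : Lpast L t l ⊆ Lpast L s l :=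
  fun _ hω k hk => hω k (hk.trans hst)

theorem Apast_succ (t : Fin K) (a : Fin K → Bool) :
    Apast A (t + 1) a = Apast A t a ∩ {ω | A t ω = a t} := by
  ext ω
  simp only [Apast, Set.mem_inter_iff, Set.mem_ofPred_eq, Nat.lt_succ_iff_lt_or_eq, Fin.val_inj,
    or_imp, forall_and, forall_eq]

theorem Apast_eq_of_mem {t : ℕ} {a : Fin K → Bool} {ω : Ω} (hω : ω ∈ Apast A t a) :
    Apast A t (fun j => A j ω) = Apast A t a := by
  ext ω'
  exact forall₂_congr fun k hk => by rw [← hω k hk]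

theorem Lpast_eq_of_mem {t : ℕ} {l : Fin K → 𝓛} {ω : Ω} (hω : ω ∈ Lpast L t l) :
    Lpast L t (fun j => L j ω) = Lpast L t l := by
  ext ω'
  exact forall₂_congr fun k hk => by rw [← hω k hk]

end History

section InverseWeighting

variable {Ω : Type*} [MeasurableSpace Ω] {𝓛 : Type*} {K : ℕ}

noncomputable def propensity (P : Measure Ω) (A : Fin K → Ω → Bool) (L : Fin K → Ω → 𝓛)
    (k : Fin K) (ω : Ω) : ℝ :=
  cP P {ω' | A k ω' = A k ω} (Lpast L k (fun j => L j ω) ∩ Apast A k (fun j => A j ω))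

/-- The consequence of (A2) that inverse weighting uses: within each stratum
`L̄(k) = l̄, Ā(k−1) = ā(k−1)`, restricting further to `A(k) = a(k)` does not change the mean
of `X`. -/
def MeanExchangeableAt (P : Measure Ω) (A : Fin K → Ω → Bool) (L : Fin K → Ω → 𝓛)
    (a : Fin K → Bool) (X : Ω → ℝ) (k : Fin K) : Prop :=
  ∀ l : Fin K → 𝓛, 0 < P (Lpast L k l ∩ Apast A k a) →
    ∫ ω in Lpast L k l ∩ Apast A k a ∩ {ω | A k ω = a k}, X ω ∂P =
      cP P {ω | A k ω = a k} (Lpast L k l ∩ Apast A k a) *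
        ∫ ω in Lpast L k l ∩ Apast A k a, X ω ∂P

variable (P : Measure Ω) {A : Fin K → Ω → Bool} {L : Fin K → Ω → 𝓛}

theorem propensity_eq_of_mem {t : Fin K} {l : Fin K → 𝓛} {a : Fin K → Bool} {ω : Ω}
    (hωL : ω ∈ Lpast L t l) (hωA : ω ∈ Apast A t a) (hωt : A t ω = a t) :
    propensity P A L t ω = cP P {ω' | A t ω' = a t} (Lpast L t l ∩ Apast A t a) := by
  rw [propensity, hωt, Lpast_eq_of_mem hωL, Apast_eq_of_mem hωA]

theorem meanExchangeableAt_of_A2ok [IsFiniteMeasure P] {Ypot : (Fin K → Bool) → Ω → ℝ}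
    (hA2 : A2ok P A L Ypot) (a : Fin K → Bool) (hYa : Measurable (Ypot a)) (k : Fin K) :
    MeanExchangeableAt P A L a (Ypot a) k := fun l hl =>
  setIntegral_inter_eq_cP_mul P hYa fun B hB => hA2 k a B hB (a k) l a hl

theorem meanExchangeableAt_one [IsFiniteMeasure P] (a : Fin K → Bool) (k : Fin K) :
    MeanExchangeableAt P A L a (fun _ => 1) k := by
  intro l _
  simp only [setIntegral_const, measureReal_def, smul_eq_mul, mul_one]
  rw [Set.inter_comm _ {ω | A k ω = a k}, cP_mul_toReal]

variable [MeasurableSpace 𝓛]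

theorem measurable_history (hA : ∀ k, Measurable (A k)) (hL : ∀ k, Measurable (L k)) :
    Measurable fun ω => ((fun j => A j ω, fun j => L j ω) : (Fin K → Bool) × (Fin K → 𝓛)) :=
  (measurable_pi_lambda _ hA).prodMk (measurable_pi_lambda _ hL)

variable [MeasurableSingletonClass 𝓛]

theorem MeanExchangeableAt.mul_left (hA : ∀ k, Measurable (A k)) (hL : ∀ k, Measurable (L k))
    {a : Fin K → Bool} {X : Ω → ℝ} {k : Fin K} (hX : MeanExchangeableAt P A L a X k)
    {g : Ω → ℝ} (hg : ∀ l, ∃ c, Set.EqOn g (fun _ => c) (Lpast L k l ∩ Apast A k a)) :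
    MeanExchangeableAt P A L a (fun ω => g ω * X ω) k := by
  intro l hl
  obtain ⟨c, hc⟩ := hg l
  have hF : MeasurableSet (Lpast L k l ∩ Apast A k a) :=
    (measurableSet_Lpast hL _ _).inter (measurableSet_Apast hA _ _)
  have hFs : MeasurableSet (Lpast L k l ∩ Apast A k a ∩ {ω | A k ω = a k}) :=
    hF.inter (hA k (measurableSet_singleton _))
  rw [setIntegral_congr_fun hFs (g := fun ω => c * X ω) fun ω hω => by rw [hc hω.1],
    setIntegral_congr_fun hF (g := fun ω => c * X ω) fun ω hω => by rw [hc hω],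
    integral_const_mul, integral_const_mul, hX l hl, mul_left_comm]

variable [Finite 𝓛]

theorem integrable_inv_propensity_mul (hA : ∀ k, Measurable (A k))
    (hL : ∀ k, Measurable (L k)) (k : Fin K) {X : Ω → ℝ} (hX : Integrable X P) :
    Integrable (fun ω => (propensity P A L k ω)⁻¹ * X ω) P :=
  integrable_comp_finite_mul P (measurable_history hA hL)
    (fun p => (cP P {ω' | A k ω' = p.1 k} (Lpast L k p.2 ∩ Apast A k p.1))⁻¹) hX

theorem integrable_Wpsw_mul (hA : ∀ k, Measurable (A k)) (hL : ∀ k, Measurable (L k))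
    (m : ℕ) {X : Ω → ℝ} (hX : Integrable X P) :
    Integrable (fun ω => Wpsw P A L m ω * X ω) P :=
  integrable_comp_finite_mul P (measurable_history hA hL) (fun p =>
    ∏ k ∈ Finset.univ.filter (fun k : Fin K => K - m ≤ (k : ℕ)),
      cP P {ω' | A k ω' = p.1 k} (Apast A k p.1) /
        cP P {ω' | A k ω' = p.1 k} (Lpast L k p.2 ∩ Apast A k p.1)) hX

/-- On the stratum `L̄(t) = l̄` of `Ā(t) = ā(t)` the propensity is the positive constant
`P(A(t) = a(t) | L̄(t) = l̄, Ā(t−1) = ā(t−1))`, which mean exchangeability cancels. -/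
theorem setIntegral_Apast_succ_inv_propensity_mul [IsFiniteMeasure P]
    (hA : ∀ k, Measurable (A k)) (hL : ∀ k, Measurable (L k)) (hA3 : A3ok P A L)
    (a : Fin K → Bool) (t : Fin K) {X : Ω → ℝ} (hX : Integrable X P)
    (hXt : MeanExchangeableAt P A L a X t) :
    ∫ ω in Apast A (t + 1) a, (propensity P A L t ω)⁻¹ * X ω ∂P = ∫ ω in Apast A t a, X ω ∂P := by
  have : Fintype 𝓛 := Fintype.ofFinite 𝓛
  set h : Ω → ({j : Fin K // (j : ℕ) ≤ t} → 𝓛) := fun ω j => L j ω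
  have hh : Measurable h := measurable_pi_lambda _ fun j => hL j
  rw [setIntegral_eq_sum_preimage P hh (measurableSet_Apast hA _ a)
      fun _ => (integrable_inv_propensity_mul P hA hL t hX).integrableOn,
    setIntegral_eq_sum_preimage P hh (measurableSet_Apast hA _ a) fun _ => hX.integrableOn]
  refine Finset.sum_congr rfl fun v _ => ?_
  rcases (h ⁻¹' {v}).eq_empty_or_nonempty with hv | ⟨ω₀, rfl : h ω₀ = v⟩
  · simp [hv]
  set F := Lpast L t (fun j => L j ω₀) ∩ Apast A t a
  set s := {ω | A t ω = a t}
  have hfiber : h ⁻¹' {h ω₀} = Lpast L t (fun j => L j ω₀) := by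
    ext ω
    simp only [Set.mem_preimage, Set.mem_singleton_iff, funext_iff, Subtype.forall, h]
    rfl
  have hF : Apast A t a ∩ h ⁻¹' {h ω₀} = F := by rw [hfiber, Set.inter_comm]
  have hFs : Apast A (t + 1) a ∩ h ⁻¹' {h ω₀} = F ∩ s := by
    rw [Apast_succ, hfiber, Set.inter_right_comm, Set.inter_comm (Apast A t a)]
  rw [hF, hFs]
  rcases eq_zero_or_pos (P F) with hF0 | hFpos
  · rw [Measure.restrict_eq_zero.2 hF0,
      Measure.restrict_eq_zero.2 (measure_mono_null Set.inter_subset_left hF0)]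
    simp
  have hc : cP P s F ≠ 0 := (hA3 t (a t) _ a hFpos).ne'
  calc ∫ ω in F ∩ s, (propensity P A L t ω)⁻¹ * X ω ∂P
      = ∫ ω in F ∩ s, (cP P s F)⁻¹ * X ω ∂P :=
        setIntegral_congr_fun (((measurableSet_Lpast hL _ _).inter
          (measurableSet_Apast hA _ _)).inter (hA t (measurableSet_singleton _)))
          fun ω hω => by rw [propensity_eq_of_mem P hω.1.1 hω.1.2 hω.2]
    _ = ∫ ω in F, X ω ∂P := by
        rw [integral_const_mul, hXt _ hFpos, inv_mul_cancel_left₀ hc]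

/-- Backward induction on `t`: the inverse propensity at time `t` is a function of the history
up to `t`, so it can be absorbed into `X` without breaking mean exchangeability at later times. -/
theorem setIntegral_Apast_prod_inv_propensity_mul [IsFiniteMeasure P]
    (hA : ∀ k, Measurable (A k)) (hL : ∀ k, Measurable (L k)) (hA3 : A3ok P A L)
    (a : Fin K → Bool) {t : ℕ} (ht : t ≤ K) {X : Ω → ℝ} (hX : Integrable X P)
    (hXexch : ∀ k : Fin K, t ≤ k → MeanExchangeableAt P A L a X k) :
    ∫ ω in Apast A K a,
        (∏ k ∈ Finset.univ.filter (fun k : Fin K => t ≤ (k : ℕ)), (propensity P A L k ω)⁻¹) *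
          X ω ∂P =
      ∫ ω in Apast A t a, X ω ∂P := by
  induction ht using Nat.decreasingInduction generalizing X with
  | self => simp [Finset.filter_false_of_mem fun (k : Fin K) _ => not_le.2 k.isLt]
  | of_succ t ht ih =>
    set t' : Fin K := ⟨t, ht⟩
    have hexch' : ∀ k : Fin K, t + 1 ≤ k →
        MeanExchangeableAt P A L a (fun ω => (propensity P A L t' ω)⁻¹ * X ω) k := by
      refine fun k hk => (hXexch k (by omega)).mul_left P hA hL fun l =>
        ⟨(cP P {ω | A t' ω = a t'} (Lpast L t' l ∩ Apast A t' a))⁻¹, fun ω hω => ?_⟩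
      have hωA : ω ∈ Apast A (t + 1) a := Apast_anti hk a hω.2
      rw [Apast_succ t'] at hωA
      dsimp only
      rw [propensity_eq_of_mem P (Lpast_anti (show (t' : ℕ) ≤ k by simp [t']; omega) l hω.1)
        hωA.1 hωA.2]
    calc ∫ ω in Apast A K a,
          (∏ k ∈ Finset.univ.filter (fun k : Fin K => t ≤ (k : ℕ)), (propensity P A L k ω)⁻¹) *
            X ω ∂P
        = ∫ ω in Apast A K a,
            (∏ k ∈ Finset.univ.filter (fun k : Fin K => t + 1 ≤ (k : ℕ)),
              (propensity P A L k ω)⁻¹) * ((propensity P A L t' ω)⁻¹ * X ω) ∂P := by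
          congr 1 with ω
          rw [prod_filter_le_eq_mul ht]
          ring
      _ = ∫ ω in Apast A (t' + 1) a, (propensity P A L t' ω)⁻¹ * X ω ∂P :=
          ih (integrable_inv_propensity_mul P hA hL t' hX) hexch'
      _ = ∫ ω in Apast A t a, X ω ∂P :=
          setIntegral_Apast_succ_inv_propensity_mul P hA hL hA3 a t' hX (hXexch t' le_rfl)

end InverseWeighting

section Telescoping

variable {Ω : Type*} [MeasurableSpace Ω] (P : Measure Ω) {K : ℕ} (A : Fin K → Ω → Bool)

noncomputable def tailTreatmentProb (t : ℕ) (a : Fin K → Bool) : ℝ :=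
  ∏ k ∈ Finset.univ.filter (fun k : Fin K => t ≤ (k : ℕ)), cP P {ω | A k ω = a k} (Apast A k a)

theorem tailTreatmentProb_mul_toReal_Apast [IsFiniteMeasure P] (a : Fin K → Bool) {t : ℕ}
    (ht : t ≤ K) :
    tailTreatmentProb P A t a * (P (Apast A t a)).toReal = (P (Apast A K a)).toReal := by
  induction ht using Nat.decreasingInduction with
  | self =>
    simp [tailTreatmentProb, Finset.filter_false_of_mem fun (k : Fin K) _ => not_le.2 k.isLt]
  | of_succ t ht ih =>
    rw [← ih, tailTreatmentProb, prod_filter_le_eq_mul ht, mul_comm (cP _ _ _), mul_assoc,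
      cP_mul_toReal, Set.inter_comm, ← Apast_succ ⟨t, ht⟩]
    rfl

end Telescoping

section Regimes

variable {Ω : Type*} {K : ℕ} (A : Fin K → Ω → Bool) (m : ℕ)

theorem measurable_pastTreatments [MeasurableSpace Ω] (hA : ∀ k, Measurable (A k)) :
    Measurable fun ω (k : {k : Fin K // (k : ℕ) < K - m}) => A k ω :=
  measurable_pi_lambda _ fun k => hA k

theorem preimage_pastTreatments (b : {k : Fin K // (k : ℕ) < K - m} → Bool) :
    (fun ω (k : {k : Fin K // (k : ℕ) < K - m}) => A k ω) ⁻¹' {b} = ApastV A m b := by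
  ext ω
  simp only [Set.mem_preimage, Set.mem_singleton_iff, funext_iff, Subtype.forall]
  rfl

theorem ApastV_eq_Apast (b : {k : Fin K // (k : ℕ) < K - m} → Bool) (as : Fin K → Bool) :
    ApastV A m b = Apast A (K - m) (concatRegime m b as) := by
  ext ω
  exact forall₂_congr fun k hk => by rw [concatRegime, dif_pos hk]

theorem Etr_inter_ApastV (a : Bool) (b : {k : Fin K // (k : ℕ) < K - m} → Bool) :
    Etr A m a ∩ ApastV A m b = Apast A K (concatRegime m b fun _ => a) := by
  ext ω
  simp only [Etr, EtrV, ApastV, Apast, concatRegime, Set.mem_inter_iff, Set.mem_ofPred_eq]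
  constructor
  · rintro ⟨hE, hV⟩ k -
    split_ifs with hk
    exacts [hV k hk, hE k (not_lt.1 hk)]
  · intro h
    refine ⟨fun k hk => ?_, fun k hk => ?_⟩
    · simpa [dif_neg (not_lt.2 hk)] using h k k.isLt
    · simpa [dif_pos hk] using h k k.isLt

end Regimes

section Estimand

variable {Ω : Type*} [MeasurableSpace Ω] (P : Measure Ω) {𝓛 : Type*} {K : ℕ}
  {A : Fin K → Ω → Bool} {L : Fin K → Ω → 𝓛}

theorem Wpsw_eq_of_mem (m : ℕ) {a : Fin K → Bool} {ω : Ω} (hω : ω ∈ Apast A K a) :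
    Wpsw P A L m ω = tailTreatmentProb P A (K - m) a *
      ∏ k ∈ Finset.univ.filter (fun k : Fin K => K - m ≤ (k : ℕ)), (propensity P A L k ω)⁻¹ := by
  rw [tailTreatmentProb, ← Finset.prod_mul_distrib]
  refine Finset.prod_congr rfl fun k _ => ?_
  rw [← div_eq_mul_inv, ← hω k k.isLt, ← Apast_eq_of_mem (Apast_anti k.isLt.le a hω)]
  rfl

variable [MeasurableSpace 𝓛] [Finite 𝓛] [MeasurableSingletonClass 𝓛] [IsFiniteMeasure P]

theorem setIntegral_Apast_Wpsw_mul (hA : ∀ k, Measurable (A k)) (hL : ∀ k, Measurable (L k))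
    (hA3 : A3ok P A L) (m : ℕ) (a : Fin K → Bool) {X : Ω → ℝ} (hX : Integrable X P)
    (hXexch : ∀ k : Fin K, K - m ≤ k → MeanExchangeableAt P A L a X k) :
    ∫ ω in Apast A K a, Wpsw P A L m ω * X ω ∂P =
      tailTreatmentProb P A (K - m) a * ∫ ω in Apast A (K - m) a, X ω ∂P := by
  rw [← setIntegral_Apast_prod_inv_propensity_mul P hA hL hA3 a (Nat.sub_le K m) hX hXexch,
    ← integral_const_mul]
  exact setIntegral_congr_fun (measurableSet_Apast hA K a) fun ω hω => by
    simp only [Wpsw_eq_of_mem P m hω, mul_assoc]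

theorem setIntegral_Etr_Wpsw_mul (hA : ∀ k, Measurable (A k)) (hL : ∀ k, Measurable (L k))
    (hA3 : A3ok P A L) (m : ℕ) (a : Bool) (X : ({k : Fin K // (k : ℕ) < K - m} → Bool) → Ω → ℝ)
    (hX : ∀ b, Integrable (X b) P)
    (hXexch : ∀ b (k : Fin K), K - m ≤ k →
      MeanExchangeableAt P A L (concatRegime m b fun _ => a) (X b) k)
    {f : Ω → ℝ} (hf : ∀ b, Set.EqOn f (X b) (Etr A m a ∩ ApastV A m b)) :
    ∫ ω in Etr A m a, Wpsw P A L m ω * f ω ∂P =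
      ∑ b, tailTreatmentProb P A (K - m) (concatRegime m b fun _ => a) *
        ∫ ω in ApastV A m b, X b ω ∂P := by
  have hpiece : ∀ b, Set.EqOn (fun ω => Wpsw P A L m ω * f ω)
      (fun ω => Wpsw P A L m ω * X b ω) (Etr A m a ∩ ApastV A m b) := fun b ω hω => by
    simp only [hf b hω]
  have hmeas : ∀ b, MeasurableSet (Etr A m a ∩ ApastV A m b) := fun b =>
    preimage_pastTreatments A m b ▸ (measurableSet_Etr hA m a).inter
      (measurable_pastTreatments A m hA (measurableSet_singleton b))
  rw [setIntegral_eq_sum_preimage P (measurable_pastTreatments A m hA) (measurableSet_Etr hA m a)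
    fun b => by
      rw [preimage_pastTreatments, integrableOn_congr_fun (hpiece b) (hmeas b)]
      exact (integrable_Wpsw_mul P hA hL m (hX b)).integrableOn]
  refine Finset.sum_congr rfl fun b _ => ?_
  rw [preimage_pastTreatments, setIntegral_congr_fun (hmeas b) (hpiece b), Etr_inter_ApastV,
    setIntegral_Apast_Wpsw_mul P hA hL hA3 m _ (hX b) (hXexch b), ← ApastV_eq_Apast]

theorem setIntegral_Etr_Wpsw (hA : ∀ k, Measurable (A k)) (hL : ∀ k, Measurable (L k))
    (hA3 : A3ok P A L) (m : ℕ) (a : Bool) :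
    ∫ ω in Etr A m a, Wpsw P A L m ω ∂P = (P (Etr A m a)).toReal := by
  have hparts := setIntegral_Etr_Wpsw_mul P hA hL hA3 m a (fun _ _ => 1)
    (fun _ => integrable_const 1) (fun b k _ => meanExchangeableAt_one P _ k)
    (f := fun _ => 1) fun _ => Set.eqOn_refl _ _
  have hmass := setIntegral_eq_sum_preimage P (measurable_pastTreatments A m hA)
    (measurableSet_Etr hA m a) (f := fun _ => (1 : ℝ)) fun _ => integrableOn_const
  simp only [mul_one, setIntegral_const, measureReal_def, smul_eq_mul] at hparts hmass
  rw [hparts, hmass]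
  refine Finset.sum_congr rfl fun b _ => ?_
  rw [ApastV_eq_Apast A m b fun _ => a, tailTreatmentProb_mul_toReal_Apast P A _ (Nat.sub_le K m),
    preimage_pastTreatments, Etr_inter_ApastV]

theorem weightedMean_Etr_Wpsw (hA : ∀ k, Measurable (A k)) (hL : ∀ k, Measurable (L k))
    {Y : Ω → ℝ} {Ypot : (Fin K → Bool) → Ω → ℝ} (hYpm : ∀ a, Measurable (Ypot a))
    (hYpi : ∀ a, Integrable (Ypot a) P) (hA1 : A1ok A Y Ypot) (hA2 : A2ok P A L Ypot)
    (hA3 : A3ok P A L) (m : ℕ) (a : Bool) :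
    (∫ ω in Etr A m a, Wpsw P A L m ω * Y ω ∂P) / (∫ ω in Etr A m a, Wpsw P A L m ω ∂P) =
      ∑ b : ({k : Fin K // (k : ℕ) < K - m} → Bool),
        if 0 < P (ApastV A m b) then
          ((∫ ω in ApastV A m b, Ypot (concatRegime m b fun _ => a) ω ∂P) /
              (P (ApastV A m b)).toReal) * cP P (ApastV A m b) (Etr A m a)
        else 0 := by
  rw [setIntegral_Etr_Wpsw_mul P hA hL hA3 m a (fun b => Ypot (concatRegime m b fun _ => a))
      (fun _ => hYpi _) (fun _ k _ => meanExchangeableAt_of_A2ok P hA2 _ (hYpm _) k)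
      fun b ω hω => hA1 _ ω fun k => (Etr_inter_ApastV A m a b ▸ hω) k k.isLt,
    setIntegral_Etr_Wpsw P hA hL hA3 m a, Finset.sum_div]
  refine Finset.sum_congr rfl fun b _ => ?_
  split_ifs with hb
  · have hb' : (P (ApastV A m b)).toReal ≠ 0 :=
      ENNReal.toReal_ne_zero.2 ⟨hb.ne', measure_ne_top P _⟩
    rw [cP, Set.inter_comm, Etr_inter_ApastV, ← tailTreatmentProb_mul_toReal_Apast P A _
      (Nat.sub_le K m), ← ApastV_eq_Apast]
    field_simp
  · rw [Measure.restrict_eq_zero.2 (nonpos_iff_eq_zero.1 (not_lt.1 hb)), integral_zero_measure,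
      mul_zero, zero_div]

end Estimand

theorem psw_estimand_characterization_general
    {Ω : Type*} [MeasurableSpace Ω] {𝓛 : Type*} [MeasurableSpace 𝓛]
    [Fintype 𝓛] [MeasurableSingletonClass 𝓛]
    (P : Measure Ω) [IsProbabilityMeasure P]
    {K m : ℕ}
    (A : Fin K → Ω → Bool) (L : Fin K → Ω → 𝓛)
    (hA : ∀ k, Measurable (A k)) (hL : ∀ k, Measurable (L k))
    (Y : Ω → ℝ)
    (Ypot : (Fin K → Bool) → Ω → ℝ)
    (hYpm : ∀ a, Measurable (Ypot a)) (hYpi : ∀ a, Integrable (Ypot a) P)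
    (hA1 : A1ok A Y Ypot) (hA2 : A2ok P A L Ypot) (hA3 : A3ok P A L) :
    θW P A m (Wpsw P A L m) Y =
      (∑ b : ({k : Fin K // (k : ℕ) < K - m} → Bool),
          if 0 < P (ApastV A m b) then
            ((∫ ω in ApastV A m b, Ypot (concatRegime m b (fun _ => true)) ω ∂P) /
                (P (ApastV A m b)).toReal) *
              cP P (ApastV A m b) (Etr A m true)
          else 0) -
        ∑ b : ({k : Fin K // (k : ℕ) < K - m} → Bool),
          if 0 < P (ApastV A m b) then
            ((∫ ω in ApastV A m b, Ypot (concatRegime m b (fun _ => false)) ω ∂P) /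
                (P (ApastV A m b)).toReal) *
              cP P (ApastV A m b) (Etr A m false)
          else 0 := by
  rw [θW, weightedMean_Etr_Wpsw P hA hL hYpm hYpi hA1 hA2 hA3 m true,
    weightedMean_Etr_Wpsw P hA hL hYpm hYpi hA1 hA2 hA3 m false]

/-- Characterization of the PSW estimand (equation (B.4.2)). -/
theorem psw_estimand_characterization
    {Ω : Type*} [MeasurableSpace Ω] {𝓛 : Type*} [MeasurableSpace 𝓛]
    [Fintype 𝓛] [Nonempty 𝓛] [MeasurableSingletonClass 𝓛]
    (P : Measure Ω) [IsProbabilityMeasure P]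
    {K m : ℕ} (hK : 1 ≤ K) (hm1 : 1 ≤ m) (hmK : m ≤ K)
    (A : Fin K → Ω → Bool) (L : Fin K → Ω → 𝓛)
    (hA : ∀ k, Measurable (A k)) (hL : ∀ k, Measurable (L k))
    (Y : Ω → ℝ) (hY : Measurable Y)
    (Ypot : (Fin K → Bool) → Ω → ℝ)
    (hYpm : ∀ a, Measurable (Ypot a)) (hYpi : ∀ a, Integrable (Ypot a) P)
    (hpos1 : 0 < P (Etr A m true)) (hpos0 : 0 < P (Etr A m false))
    (hA1 : A1ok A Y Ypot) (hA2 : A2ok P A L Ypot) (hA3 : A3ok P A L) :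
    θW P A m (Wpsw P A L m) Y =
      (∑ b : ({k : Fin K // (k : ℕ) < K - m} → Bool),
          if 0 < P (ApastV A m b) then
            ((∫ ω in ApastV A m b, Ypot (concatRegime m b (fun _ => true)) ω ∂P) /
                (P (ApastV A m b)).toReal) *
              cP P (ApastV A m b) (Etr A m true)
          else 0) -
        ∑ b : ({k : Fin K // (k : ℕ) < K - m} → Bool),
          if 0 < P (ApastV A m b) then
            ((∫ ω in ApastV A m b, Ypot (concatRegime m b (fun _ => false)) ω ∂P) /
                (P (ApastV A m b)).toReal) *
              cP P (ApastV A m b) (Etr A m false)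
          else 0 :=
  psw_estimand_characterization_general P A L hA hL Y Ypot hYpm hYpi hA1 hA2 hA3

end MSMPaper
end

section
/- Core conditional-independence lemma of Theorem 6: Let F : ℝ × (S → ℝ) → ℝ, f : ℝ → ℝ, and G : ℝ × (T → ℝ) → ℝ be measurable, and define X(ω) = F(ε_{i₀}(ω), (ε_i(ω))_{i∈S}), W₀(ω) = f(ε_{i₀}(ω)), and Z(ω) = G(W₀(ω), (ε_j(ω))_{j∈T}). Then X and Z are conditionally independent given the σ-algebra generated by W₀. (In the structural causal model (5), under (A8) and (A9) the potential outcome Y^{ā} is a measurable function of (ε_{L(0)}, ε_{L(K−m+1)}, …, ε_{L(K−1)}, ε_Y) and the treatment history Ā(K−m−1) is a measurable function of (L(0), ε_{L(1)}, …, ε_{L(K−m−1)}, ε_{A(0)}, …, ε_{A(K−m−1)}) with L(0) = f_{L(0)}(ε_{L(0)}), so this lemma yields assumption (A7)′: Y^{ā} is conditionally independent of Ā(K−m−1) given L(0).) -/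
/-!
With `U = (ε_{i₀}, ε_S)` and `V = ε_T`, independence of the family makes `U` independent of
`V`, while `X`, `W₀` are functions of `U` and `Z` is a function of `(W₀, V)`. So it suffices
that `σ(U) ⊥ σ(W₀) ⊔ σ(V)` conditionally on `σ(W₀) ≤ σ(U)`. Conditionally on a sub-σ-algebra
of `σ(U)`, the independent `σ(V)` stays independent of `σ(U)`, since conditioning on `σ(U)`
first replaces `1_B` by `P(B)`; and adding the conditioning σ-algebra to one side never breaks
conditional independence, since its indicators factor out of every conditional expectation.
-/

open MeasureTheory ProbabilityTheory MeasurableSpace Set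

section

variable {Ω : Type*} {mΩ : MeasurableSpace Ω} {μ : Measure Ω}

theorem MeasureTheory.condExp_inter_ae_eq_indicator {m : MeasurableSpace Ω} [IsFiniteMeasure μ]
    {s u : Set Ω} (hs : MeasurableSet[m] s) (hu : MeasurableSet[mΩ] u) :
    μ⟦s ∩ u | m⟧ =ᵐ[μ] s.indicator (μ⟦u | m⟧) := by
  have h := condExp_indicator ((integrable_const (μ := μ) (1 : ℝ)).indicator hu) hs
  rwa [indicator_indicator] at h

theorem isPiSystem_image2_inter_measurableSet (m₁ m₂ : MeasurableSpace Ω) :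
    IsPiSystem (image2 (· ∩ ·) {s | MeasurableSet[m₁] s} {s | MeasurableSet[m₂] s}) := by
  rintro _ ⟨s, hs, b, hb, rfl⟩ _ ⟨s', hs', b', hb', rfl⟩ _
  exact ⟨s ∩ s', hs.inter hs', b ∩ b', hb.inter hb', inter_inter_inter_comm s s' b b'⟩

theorem generateFrom_image2_inter_measurableSet (m₁ m₂ : MeasurableSpace Ω) :
    generateFrom (image2 (· ∩ ·) {s | MeasurableSet[m₁] s} {s | MeasurableSet[m₂] s}) =
      m₁ ⊔ m₂ := by
  refine le_antisymm (generateFrom_le ?_) (sup_le (fun s hs => ?_) (fun b hb => ?_))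
  · rintro _ ⟨s, hs, b, hb, rfl⟩
    exact (le_sup_left (a := m₁) _ hs).inter (le_sup_right (a := m₁) _ hb)
  · exact measurableSet_generateFrom ⟨s, hs, univ, .univ, inter_univ s⟩
  · exact measurableSet_generateFrom ⟨univ, .univ, b, hb, univ_inter b⟩

namespace ProbabilityTheory

section

variable [StandardBorelSpace Ω] {m' m₁ m₂ : MeasurableSpace Ω}

theorem Indep.condIndep_of_le_left [IsProbabilityMeasure μ] (h : Indep m₁ m₂ μ)
    (hm₁ : m₁ ≤ mΩ) (hm₂ : m₂ ≤ mΩ) (hm'₁ : m' ≤ m₁) :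
    CondIndep m' m₁ m₂ (hm'₁.trans hm₁) μ := by
  rw [condIndep_iff _ _ _ _ hm₁ hm₂]
  intro t b ht hb
  have hb_mean {m : MeasurableSpace Ω} (hm : m ≤ m₁) :
      μ⟦b | m⟧ =ᵐ[μ] fun _ => μ.real b := by
    have h := condExp_indep_eq hm₂ (hm.trans hm₁)
      ((stronglyMeasurable_const (b := (1 : ℝ))).indicator hb)
      (indep_of_indep_of_le_left h hm).symm
    rwa [integral_indicator_const _ (hm₂ _ hb), smul_eq_mul, mul_one] at h
  calc μ⟦t ∩ b | m'⟧ =ᵐ[μ] μ[μ⟦t ∩ b | m₁⟧ | m'] :=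
        (condExp_condExp_of_le hm'₁ hm₁).symm
    _ =ᵐ[μ] μ[t.indicator fun _ => μ.real b | m'] := condExp_congr_ae
      ((condExp_inter_ae_eq_indicator ht (hm₂ _ hb)).trans (hb_mean le_rfl).indicator)
    _ =ᵐ[μ] μ.real b • μ⟦t | m'⟧ := by
      convert condExp_smul (μ := μ) (μ.real b) (t.indicator fun _ => (1 : ℝ)) m' using 2
      ext ω
      by_cases hω : ω ∈ t <;> simp [hω]
    _ =ᵐ[μ] μ⟦t | m'⟧ * μ⟦b | m'⟧ := by
      filter_upwards [hb_mean hm'₁] with ω hω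
      rw [Pi.smul_apply, Pi.mul_apply, hω, smul_eq_mul, mul_comm]

theorem CondIndep.condIndep_sup_right [IsFiniteMeasure μ] {hm' : m' ≤ mΩ}
    (h : CondIndep m' m₁ m₂ hm' μ) (hm₁ : m₁ ≤ mΩ) (hm₂ : m₂ ≤ mΩ) :
    CondIndep m' m₁ (m' ⊔ m₂) hm' μ := by
  rw [condIndep_iff _ _ _ _ hm₁ hm₂] at h
  refine CondIndepSets.condIndep hm₁ (sup_le hm' hm₂) (@isPiSystem_measurableSet Ω m₁)
    (isPiSystem_image2_inter_measurableSet m' m₂) (@generateFrom_measurableSet Ω m₁).symm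
    (generateFrom_image2_inter_measurableSet m' m₂).symm ?_
  refine (condIndepSets_iff _ _ _ _ hm₁ ?_ μ).2 ?_
  · rintro _ ⟨s, hs, b, hb, rfl⟩
    exact (hm' _ hs).inter (hm₂ _ hb)
  rintro t _ ht ⟨s, hs, b, hb, rfl⟩
  calc μ⟦t ∩ (s ∩ b) | m'⟧ = μ⟦s ∩ (t ∩ b) | m'⟧ := by rw [inter_left_comm]
    _ =ᵐ[μ] s.indicator (μ⟦t ∩ b | m'⟧) :=
      condExp_inter_ae_eq_indicator hs ((hm₁ _ ht).inter (hm₂ _ hb))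
    _ =ᵐ[μ] s.indicator (μ⟦t | m'⟧ * μ⟦b | m'⟧) := (h t b ht hb).indicator
    _ = μ⟦t | m'⟧ * s.indicator (μ⟦b | m'⟧) := by
      ext ω; exact indicator_mul_right s _ _
    _ =ᵐ[μ] μ⟦t | m'⟧ * μ⟦s ∩ b | m'⟧ :=
      Filter.EventuallyEq.rfl.mul (condExp_inter_ae_eq_indicator hs (hm₂ _ hb)).symm

end

theorem IndepFun.condIndepFun_comp [StandardBorelSpace Ω] [IsProbabilityMeasure μ]
    {α β γ δ ζ : Type*} [MeasurableSpace α] [MeasurableSpace β] [MeasurableSpace γ]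
    [MeasurableSpace δ] [MeasurableSpace ζ] {U : Ω → α} {V : Ω → β}
    (hUV : IndepFun U V μ) (hU : Measurable U) (hV : Measurable V)
    {φ : α → γ} {ψ : α → δ} {χ : γ × β → ζ}
    (hφ : Measurable φ) (hψ : Measurable ψ) (hχ : Measurable χ) :
    CondIndepFun (MeasurableSpace.comap (fun ω => φ (U ω)) inferInstance) (hφ.comp hU).comap_le
      (fun ω => ψ (U ω)) (fun ω => χ (φ (U ω), V ω)) μ := by
  have hU' : Measurable[MeasurableSpace.comap U inferInstance] U := Measurable.of_comap_le le_rfl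
  have hWV : Measurable[MeasurableSpace.comap (fun ω => φ (U ω)) inferInstance ⊔
      MeasurableSpace.comap V inferInstance] (fun ω => (φ (U ω), V ω)) :=
    (Measurable.of_comap_le le_sup_left).prodMk (Measurable.of_comap_le le_sup_right)
  rw [condIndepFun_iff_condIndep]
  exact condIndep_of_condIndep_of_le_right
    (condIndep_of_condIndep_of_le_left
      ((((IndepFun_iff_Indep U V μ).1 hUV).condIndep_of_le_left hU.comap_le hV.comap_le
        (hφ.comp hU').comap_le).condIndep_sup_right hU.comap_le hV.comap_le)
      (hψ.comp hU').comap_le)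
    (hχ.comp hWV).comap_le

end ProbabilityTheory

end

theorem condIndep_of_structural_general
    {Ω : Type*} [MeasurableSpace Ω] [StandardBorelSpace Ω]
    (P : Measure Ω) [IsProbabilityMeasure P]
    {I : Type*} (i₀ : I) (ε : I → Ω → ℝ)
    (hε : ∀ i, Measurable (ε i))
    (hind : iIndepFun ε P)
    (S T : Finset I) (hT : i₀ ∉ T) (hST : Disjoint S T)
    (F : ℝ × (S → ℝ) → ℝ) (hF : Measurable F)
    (f : ℝ → ℝ) (hf : Measurable f)
    (G : ℝ × (T → ℝ) → ℝ) (hG : Measurable G) :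
    CondIndepFun (MeasurableSpace.comap (fun ω => f (ε i₀ ω)) inferInstance)
      ((hf.comp (hε i₀)).comap_le)
      (fun ω => F (ε i₀ ω, fun i : S => ε i ω))
      (fun ω => G (f (ε i₀ ω), fun j : T => ε j ω)) P := by
  classical
  have hUV := hind.indepFun_finset (insert i₀ S) T
    (Finset.disjoint_insert_left.2 ⟨hT, hST⟩) hε
  exact hUV.condIndepFun_comp (measurable_pi_lambda _ fun i => hε i)
    (measurable_pi_lambda _ fun j => hε j)
    (φ := fun u => f (u ⟨i₀, Finset.mem_insert_self i₀ S⟩))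
    (ψ := fun u => F (u ⟨i₀, Finset.mem_insert_self i₀ S⟩,
      fun i : S => u ⟨i, Finset.mem_insert_of_mem i.2⟩))
    (by fun_prop) (by fun_prop) hG

/-- Core conditional-independence lemma for Theorem 6: if `(ε_i)_{i∈I}` are independent,
`X = F(ε_{i₀}, ε_S)`, `W₀ = f(ε_{i₀})`, and `Z = G(W₀, ε_T)` with `i₀ ∉ S`, `i₀ ∉ T`
and `S`, `T` disjoint, then `X` and `Z` are conditionally independent given `σ(W₀)`. -/
theorem condIndep_of_structural
    {Ω : Type*} [MeasurableSpace Ω] [StandardBorelSpace Ω]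
    (P : Measure Ω) [IsProbabilityMeasure P]
    {I : Type*} (i₀ : I) (ε : I → Ω → ℝ)
    (hε : ∀ i, Measurable (ε i))
    (hind : iIndepFun ε P)
    (S T : Finset I) (hS : i₀ ∉ S) (hT : i₀ ∉ T) (hST : Disjoint S T)
    (F : ℝ × (S → ℝ) → ℝ) (hF : Measurable F)
    (f : ℝ → ℝ) (hf : Measurable f)
    (G : ℝ × (T → ℝ) → ℝ) (hG : Measurable G) :
    CondIndepFun (MeasurableSpace.comap (fun ω => f (ε i₀ ω)) inferInstance)
      ((hf.comp (hε i₀)).comap_le)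
      (fun ω => F (ε i₀ ω, fun i : S => ε i ω))
      (fun ω => G (f (ε i₀ ω), fun j : T => ε j ω)) P :=
  condIndep_of_structural_general P i₀ ε hε hind S T hT hST F hF f hf G hG
end
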